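/- arXiv:1608.07842 — 2 statements merged into one kernel-verified Lean document; each statement's English description precedes it below -/
import Mathlib

section
/- Let q, z ∈ ℂ with 0 < |q| < 1, z ≠ 0, and z ≠ q^k for every nonzero integer k. Then 1/((zq;q)_∞ (z⁻¹q;q)_∞) = 2 − z − z⁻¹ + (z + z⁻¹)·Ũ₁(z,q) − Ũ₂(z,q). -/
/-- The finite q-Pochhammer symbol `(z;q)_n = ∏_{i=0}^{n-1} (1 - z q^i)`. -/
noncomputable def qPoch (z q : ℂ) (n : ℕ) : ℂ := ∏ i ∈ Finset.range n, (1 - z * q ^ i)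

/-- The infinite q-Pochhammer symbol `(z;q)_∞ = ∏_{i=0}^{∞} (1 - z q^i)`. -/
noncomputable def qPochInf (z q : ℂ) : ℂ := ∏' i : ℕ, (1 - z * q ^ i)

/-- The rank generating function `Ũ_k(z,q) = ∑_{n=0}^∞ q^{kn} / ((zq;q)_n (z⁻¹q;q)_n)`
for unimodal sequences with a k-fold peak. -/
noncomputable def tildeU (k : ℕ) (z q : ℂ) : ℂ :=
  ∑' n : ℕ, q ^ (k * n) / (qPoch (z * q) q n * qPoch (z⁻¹ * q) q n)

/-!
With `P n = (zq;q)_n (z⁻¹q;q)_n` one has `P (n+1) = P n (1 - (z + z⁻¹) q^(n+1) + q^(2(n+1)))`,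
so `((z + z⁻¹) q^n - q^(2n)) / P n = 1 / P n - 1 / P (n-1)` for `n ≥ 1`. The series
`(z + z⁻¹) Ũ₁ - Ũ₂` therefore telescopes, and its value is read off from `P n → (zq;q)_∞ (z⁻¹q;q)_∞`,
a limit that is nonzero because no factor vanishes.
-/

open Filter Topology Finset Asymptotics

section QPochhammer

variable {q : ℂ}

lemma summable_norm_mul_pow (w : ℂ) (hq : ‖q‖ < 1) : Summable fun n : ℕ => ‖w * q ^ n‖ := by
  simpa only [norm_mul, norm_pow] using
    (summable_geometric_of_lt_one (norm_nonneg q) hq).mul_left ‖w‖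

lemma tendsto_qPoch_qPochInf (w : ℂ) (hq : ‖q‖ < 1) :
    Tendsto (qPoch w q) atTop (𝓝 (qPochInf w q)) := by
  have : Multipliable fun n : ℕ => 1 - w * q ^ n := by
    simpa only [sub_eq_add_neg] using
      multipliable_one_add_of_summable (f := fun n => -(w * q ^ n))
        (by simpa only [norm_neg] using summable_norm_mul_pow w hq)
  exact this.hasProd.tendsto_prod_nat

lemma qPochInf_ne_zero {w : ℂ} (hq : ‖q‖ < 1) (hw : ∀ n : ℕ, 1 - w * q ^ n ≠ 0) :
    qPochInf w q ≠ 0 := by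
  simpa only [qPochInf, sub_eq_add_neg] using
    tprod_one_add_ne_zero_of_summable (f := fun n => -(w * q ^ n))
      (by simpa only [sub_eq_add_neg] using hw)
      (by simpa only [norm_neg] using summable_norm_mul_pow w hq)

end QPochhammer

section Factors

variable {z q : ℂ} (hzq : ∀ k : ℤ, k ≠ 0 → z ≠ q ^ k)
include hzq

lemma one_sub_mul_mul_pow_ne_zero (i : ℕ) : 1 - z * q * q ^ i ≠ 0 := by
  intro h
  refine hzq (-((i + 1 : ℕ) : ℤ)) (by omega) ?_
  rw [zpow_neg, zpow_natCast]
  exact eq_inv_of_mul_eq_one_left (by linear_combination -h)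

lemma one_sub_inv_mul_mul_pow_ne_zero (i : ℕ) : 1 - z⁻¹ * q * q ^ i ≠ 0 := by
  intro h
  refine hzq ((i + 1 : ℕ) : ℤ) (by omega) ?_
  rw [zpow_natCast, ← inv_inv z]
  exact (eq_inv_of_mul_eq_one_left (by linear_combination -h)).symm

end Factors

lemma summable_pow_div_of_tendsto {r L : ℂ} {P : ℕ → ℂ} (hr : ‖r‖ < 1)
    (hP : Tendsto P atTop (𝓝 L)) (hL : L ≠ 0) : Summable fun n => r ^ n / P n := by
  refine summable_of_isBigO_nat (summable_geometric_of_lt_one (norm_nonneg r) hr) ?_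
  have hbound : (fun n => (P n)⁻¹) =O[atTop] fun _ => (1 : ℝ) := (hP.inv₀ hL).isBigO_one ℝ
  simpa only [div_eq_mul_inv, norm_pow, mul_one] using
    ((isBigO_norm_right.mpr (isBigO_refl (fun n => r ^ n) atTop)).mul hbound)

lemma inv_mul_sub_inv {K : Type*} [Field K] {a b : K} (h : a * b ≠ 0) :
    (a * b)⁻¹ - a⁻¹ = (1 - b) / (a * b) := by
  obtain ⟨ha, hb⟩ := mul_ne_zero_iff.mp h
  field_simp

noncomputable def qPochPair (z q : ℂ) (n : ℕ) : ℂ := qPoch (z * q) q n * qPoch (z⁻¹ * q) q n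

section Telescoping

variable {z q : ℂ}

lemma tildeU_eq_tsum (k : ℕ) : tildeU k z q = ∑' n, q ^ (k * n) / qPochPair z q n := rfl

@[simp]
lemma qPochPair_zero : qPochPair z q 0 = 1 := by
  simp [qPochPair, qPoch]

lemma qPochPair_succ (hz : z ≠ 0) (n : ℕ) :
    qPochPair z q (n + 1) = qPochPair z q n * (1 - (z + z⁻¹) * q ^ (n + 1) + q ^ (2 * (n + 1))) := by
  simp only [qPochPair, qPoch, prod_range_succ]
  field_simp
  ring

lemma inv_qPochPair_succ_sub (hz : z ≠ 0) {n : ℕ} (h : qPochPair z q (n + 1) ≠ 0) :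
    (qPochPair z q (n + 1))⁻¹ - (qPochPair z q n)⁻¹
      = ((z + z⁻¹) * q ^ (n + 1) - q ^ (2 * (n + 1))) / qPochPair z q (n + 1) := by
  rw [qPochPair_succ hz] at h ⊢
  convert inv_mul_sub_inv h using 2
  ring

lemma sum_range_succ_div_qPochPair (hz : z ≠ 0) (hP : ∀ n, qPochPair z q n ≠ 0) (N : ℕ) :
    ∑ n ∈ range (N + 1), ((z + z⁻¹) * q ^ n - q ^ (2 * n)) / qPochPair z q n
      = z + z⁻¹ - 2 + (qPochPair z q N)⁻¹ := by
  rw [sum_range_succ', ← sum_congr rfl fun n _ => inv_qPochPair_succ_sub hz (hP (n + 1)),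
    sum_range_sub fun n => (qPochPair z q n)⁻¹]
  simp only [qPochPair_zero, inv_one, pow_zero, mul_one, mul_zero, div_one]
  ring

end Telescoping

theorem recip_pochInf_eq_tildeU_general (q z : ℂ)
    (hq1 : ‖q‖ < 1)
    (hz0 : z ≠ 0) (hzq : ∀ k : ℤ, k ≠ 0 → z ≠ q ^ k) :
    (qPochInf (z * q) q * qPochInf (z⁻¹ * q) q)⁻¹
      = 2 - z - z⁻¹ + (z + z⁻¹) * tildeU 1 z q - tildeU 2 z q := by
  set L := qPochInf (z * q) q * qPochInf (z⁻¹ * q) q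
  have hL : L ≠ 0 := mul_ne_zero
    (qPochInf_ne_zero hq1 (one_sub_mul_mul_pow_ne_zero hzq))
    (qPochInf_ne_zero hq1 (one_sub_inv_mul_mul_pow_ne_zero hzq))
  have hPL : Tendsto (qPochPair z q) atTop (𝓝 L) :=
    (tendsto_qPoch_qPochInf _ hq1).mul (tendsto_qPoch_qPochInf _ hq1)
  have hP (n : ℕ) : qPochPair z q n ≠ 0 := mul_ne_zero
    (prod_ne_zero_iff.mpr fun i _ => one_sub_mul_mul_pow_ne_zero hzq i)
    (prod_ne_zero_iff.mpr fun i _ => one_sub_inv_mul_mul_pow_ne_zero hzq i)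
  have hU (k : ℕ) (hk : k ≠ 0) :
      HasSum (fun n => q ^ (k * n) / qPochPair z q n) (tildeU k z q) := by
    simp only [tildeU_eq_tsum, pow_mul]
    exact (summable_pow_div_of_tendsto (by simpa using pow_lt_one₀ (norm_nonneg q) hq1 hk)
      hPL hL).hasSum
  have hsum := ((hU 1 one_ne_zero).mul_left (z + z⁻¹)).sub (hU 2 two_ne_zero)
  simp only [one_mul, mul_div_assoc', ← sub_div] at hsum
  have hpartial : Tendsto (fun N => z + z⁻¹ - 2 + (qPochPair z q N)⁻¹) atTop
      (𝓝 ((z + z⁻¹) * tildeU 1 z q - tildeU 2 z q)) := by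
    simpa only [sum_range_succ_div_qPochPair hz0 hP] using
      (tendsto_add_atTop_iff_nat 1).mpr hsum.tendsto_sum_nat
  have := tendsto_nhds_unique hpartial (tendsto_const_nhds.add (hPL.inv₀ hL))
  linear_combination -this

/-- For `0 < |q| < 1`, `z ≠ 0`, `z ≠ q^k` for all nonzero integers `k`,
`1/((zq;q)_∞ (z⁻¹q;q)_∞) = 2 − z − z⁻¹ + (z + z⁻¹)·Ũ₁(z,q) − Ũ₂(z,q)`. -/
theorem recip_pochInf_eq_tildeU (q z : ℂ)
    (hq0 : 0 < ‖q‖) (hq1 : ‖q‖ < 1)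
    (hz0 : z ≠ 0) (hzq : ∀ k : ℤ, k ≠ 0 → z ≠ q ^ k) :
    (qPochInf (z * q) q * qPochInf (z⁻¹ * q) q)⁻¹
      = 2 - z - z⁻¹ + (z + z⁻¹) * tildeU 1 z q - tildeU 2 z q :=
  recip_pochInf_eq_tildeU_general q z hq1 hz0 hzq
end

section
/- Let m be a positive integer, ζ_m := e^{2πi/m}, and let z ∈ ℂ with z ≠ 0, z^m ≠ 1, and |2 − z^m − z^{-m}| > 1 (so in particular z^m + z^{-m} ≠ 1). Then the series g₃(z, ζ_m) = ∑_{n=1}^∞ ζ_m^{n(n-1)} / ((z; ζ_m)_n (z⁻¹ζ_m; ζ_m)_n) converges and is given by the finite formula g₃(z, ζ_m) = (1 − z^m − z^{-m})⁻¹ · ∑_{n=0}^{m-1} ζ_m^n (z; ζ_m)_n (z⁻¹ζ_m; ζ_m)_n. -/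
lemma qPoch_zero (z q : ℂ) : qPoch z q 0 = 1 := by simp [qPoch]

lemma qPoch_succ (z q : ℂ) (n : ℕ) :
    qPoch z q (n + 1) = qPoch z q n * (1 - z * q ^ n) := Finset.prod_range_succ _ _

open Polynomial in
/-- Evaluated factorization of `x^m - 1` over the powers of a primitive root. -/
lemma cyclo_eval {m : ℕ} (hm : 0 < m) {ζ : ℂ} (hζ : IsPrimitiveRoot ζ m) (x : ℂ) :
    ∏ i ∈ Finset.range m, (x - ζ ^ i) = x ^ m - 1 := by
  have e : (1 : ℂ) ^ m = 1 := one_pow m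
  have hroots : nthRoots m (1 : ℂ) = (Multiset.range m).map (ζ ^ · * 1) := hζ.nthRoots_eq e
  have hmonic : (X ^ m - C (1 : ℂ)).Monic := monic_X_pow_sub_C 1 hm.ne'
  have hcard : Multiset.card (X ^ m - C (1 : ℂ)).roots = (X ^ m - C (1 : ℂ)).natDegree := by
    rw [natDegree_X_pow_sub_C, ← nthRoots, hroots]
    simp
  have hp := prod_multiset_X_sub_C_of_monic_of_roots_card_eq hmonic hcard
  have := congrArg (eval x) hp
  rw [eval_multiset_prod] at this
  rw [← nthRoots, hroots] at this
  simp only [Multiset.map_map, Function.comp] at this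
  have h2 : ((Multiset.range m).map fun i => eval x (X - C (ζ ^ i * 1))).prod
      = ∏ i ∈ Finset.range m, (x - ζ ^ i) := by
    rw [Finset.prod_eq_multiset_prod, Finset.range_val]
    congr 1
    refine Multiset.map_congr rfl ?_
    intro i _
    simp
  rw [h2] at this
  rw [this]
  simp [eval_pow]

lemma prod_one_sub_pow {m : ℕ} (hm : 0 < m) {ζ : ℂ} (hζ : IsPrimitiveRoot ζ m) (u : ℂ) :
    ∏ i ∈ Finset.range m, (1 - u * ζ ^ i) = 1 - u ^ m := by
  rcases eq_or_ne u 0 with rfl | hu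
  · simp [hm.ne']
  · have huu : u * u⁻¹ = 1 := mul_inv_cancel₀ hu
    have key : ∀ i : ℕ, 1 - u * ζ ^ i = u * (u⁻¹ - ζ ^ i) := by
      intro i
      field_simp
    calc ∏ i ∈ Finset.range m, (1 - u * ζ ^ i)
        = ∏ i ∈ Finset.range m, (u * (u⁻¹ - ζ ^ i)) := Finset.prod_congr rfl fun i _ => key i
      _ = u ^ m * ∏ i ∈ Finset.range m, (u⁻¹ - ζ ^ i) := by
          rw [Finset.prod_mul_distrib, Finset.prod_const, Finset.card_range]
      _ = u ^ m * ((u⁻¹) ^ m - 1) := by rw [cyclo_eval hm hζ]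
      _ = 1 - u ^ m := by
          have : u ^ m * (u⁻¹) ^ m = 1 := by
            rw [← mul_pow, huu, one_pow]
          ring_nf
          linear_combination this
  
lemma qPoch_period {m : ℕ} (hm : 0 < m) {ζ : ℂ} (hζ : IsPrimitiveRoot ζ m)
    (w : ℂ) (n : ℕ) : qPoch w ζ (n + m) = qPoch w ζ n * (1 - w ^ m) := by
  have hζm : ζ ^ m = 1 := hζ.pow_eq_one
  unfold qPoch
  rw [Finset.prod_range_add]
  congr 1
  have h1 : ∀ i : ℕ, 1 - w * ζ ^ (n + i) = 1 - (w * ζ ^ n) * ζ ^ i := by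
    intro i; rw [pow_add]; ring
  calc ∏ i ∈ Finset.range m, (1 - w * ζ ^ (n + i))
      = ∏ i ∈ Finset.range m, (1 - (w * ζ ^ n) * ζ ^ i) :=
        Finset.prod_congr rfl fun i _ => h1 i
    _ = 1 - (w * ζ ^ n) ^ m := prod_one_sub_pow hm hζ _
    _ = 1 - w ^ m := by
        rw [mul_pow, ← pow_mul, mul_comm n m, pow_mul, hζm, one_pow, mul_one]

/-- The key finite identity, proved by induction. -/
lemma key_identity {m : ℕ} (hm : 0 < m) {ζ : ℂ} (hζ : IsPrimitiveRoot ζ m)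
    {z : ℂ} (hz0 : z ≠ 0) (hzm : z ^ m ≠ 1) :
    ∀ a b : ℕ, a + b + 1 = m →
      ζ ^ a * qPoch z ζ a * qPoch (z⁻¹ * ζ) ζ a *
        (qPoch z ζ (b + 1) * qPoch (z⁻¹ * ζ) ζ (b + 1))
      = ζ ^ ((b + 1) * b) * ((1 - z ^ m) * (1 - z⁻¹ ^ m)) := by
  have hζm : ζ ^ m = 1 := hζ.pow_eq_one
  have hζ0 : ζ ≠ 0 := by
    intro h
    rw [h, zero_pow hm.ne'] at hζm
    exact zero_ne_one hζm
  have hzz : z * z⁻¹ = 1 := mul_inv_cancel₀ hz0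
  have hfac1 : ∀ i : ℕ, 1 - z * ζ ^ i ≠ 0 := by
    intro i h
    apply hzm
    have hz1 : z * ζ ^ i = 1 := by linear_combination -h
    calc z ^ m = z ^ m * ((ζ ^ i) ^ m) := by
          rw [← pow_mul, mul_comm i m, pow_mul, hζm, one_pow, mul_one]
      _ = (z * ζ ^ i) ^ m := by rw [mul_pow]
      _ = 1 := by rw [hz1, one_pow]
  have hfac2 : ∀ i : ℕ, 1 - (z⁻¹ * ζ) * ζ ^ i ≠ 0 := by
    intro i h
    apply hzm
    have hz1 : z⁻¹ * ζ ^ (i + 1) = 1 := by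
      rw [pow_succ]; linear_combination -h
    have hz2 : z = ζ ^ (i + 1) := by
      field_simp at hz1
      rw [← hz1]
    calc z ^ m = (ζ ^ (i + 1)) ^ m := by rw [hz2]
      _ = (ζ ^ m) ^ (i + 1) := by rw [← pow_mul, mul_comm, pow_mul]
      _ = 1 := by rw [hζm, one_pow]
  have hPm : qPoch z ζ m = 1 - z ^ m := by
    have := qPoch_period hm hζ z 0
    simpa [qPoch_zero] using this
  have hQm : qPoch (z⁻¹ * ζ) ζ m = 1 - z⁻¹ ^ m := by
    have := qPoch_period hm hζ (z⁻¹ * ζ) 0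
    have h2 : (z⁻¹ * ζ) ^ m = z⁻¹ ^ m := by rw [mul_pow, hζm, mul_one]
    simpa [qPoch_zero, h2] using this
  intro a
  induction a with
  | zero =>
    intro b hb
    have hbm : b + 1 = m := by omega
    have hexp : ζ ^ ((b + 1) * b) = 1 := by
      rw [hbm, pow_mul, hζm, one_pow]
    rw [hexp, hbm, qPoch_zero, qPoch_zero, hPm, hQm]
    ring
  | succ a ih =>
    intro b hb
    have hb' : a + (b + 1) + 1 = m := by omega
    have IH := ih (b + 1) hb'
    -- abbreviations
    set A1 := 1 - z * ζ ^ a with hA1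
    set A2 := 1 - (z⁻¹ * ζ) * ζ ^ a with hA2
    set B1 := 1 - z * ζ ^ (b + 1) with hB1
    set B2 := 1 - (z⁻¹ * ζ) * ζ ^ (b + 1) with hB2
    have hPa : qPoch z ζ (a + 1) = qPoch z ζ a * A1 := qPoch_succ _ _ _
    have hQa : qPoch (z⁻¹ * ζ) ζ (a + 1) = qPoch (z⁻¹ * ζ) ζ a * A2 := qPoch_succ _ _ _
    have hPb : qPoch z ζ (b + 1 + 1) = qPoch z ζ (b + 1) * B1 := qPoch_succ _ _ _
    have hQb : qPoch (z⁻¹ * ζ) ζ (b + 1 + 1) = qPoch (z⁻¹ * ζ) ζ (b + 1) * B2 :=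
      qPoch_succ _ _ _
    have hm' : a + b + 2 = m := by omega
    -- single-factor flips
    have hpow_ab : ζ ^ (a + 1) * ζ ^ (b + 1) = 1 := by
      rw [← pow_add]
      have : a + 1 + (b + 1) = m := by omega
      rw [this, hζm]
    have h1 : ζ ^ (a + 1) * B1 = -z * A2 := by
      rw [hB1, hA2]
      have : ζ ^ (a + 1) * (z * ζ ^ (b + 1)) = z := by
        rw [show ζ ^ (a+1) * (z * ζ ^ (b+1)) = z * (ζ ^ (a+1) * ζ ^ (b+1)) by ring,
          hpow_ab, mul_one]
      have hpa : z⁻¹ * ζ * ζ ^ a = z⁻¹ * ζ ^ (a + 1) := by rw [pow_succ]; ring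
      rw [hpa]
      have hz' : z * (z⁻¹ * ζ ^ (a + 1)) = ζ ^ (a + 1) := by
        rw [show z * (z⁻¹ * ζ ^ (a+1)) = (z * z⁻¹) * ζ ^ (a+1) by ring, hzz, one_mul]
      linear_combination -this - hz'
    have h2 : ζ ^ (a + 1) * B2 = -(z⁻¹ * ζ) * A1 := by
      rw [hB2, hA1]
      have hstep : ζ ^ (a + 1) * (z⁻¹ * ζ * ζ ^ (b + 1)) = z⁻¹ * ζ := by
        rw [show ζ ^ (a+1) * (z⁻¹ * ζ * ζ ^ (b+1)) = (z⁻¹ * ζ) * (ζ ^ (a+1) * ζ ^ (b+1)) by ring,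
          hpow_ab, mul_one]
      have hz' : (z⁻¹ * ζ) * (z * ζ ^ a) = ζ ^ (a + 1) := by
        rw [show (z⁻¹ * ζ) * (z * ζ ^ a) = (z * z⁻¹) * (ζ * ζ ^ a) by ring, hzz, one_mul,
          pow_succ]
        ring
      linear_combination -hstep - hz'
    -- the exponent congruence
    have hbig : ζ ^ ((b + 2) * (b + 1) + 1 + 2 * (a + 1)) = ζ ^ ((b + 1) * b + 1) := by
      have he : (b + 2) * (b + 1) + 1 + 2 * (a + 1) = (b + 1) * b + 1 + 2 * m := by
        subst hm'
        ring
      rw [he, pow_add, mul_comm 2 m, pow_mul, hζm, one_pow, mul_one]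
    -- main step: cancel the two extra factors
    refine mul_right_cancel₀ (mul_ne_zero (hfac1 (b + 1)) (hfac2 (b + 1))) ?_
    have hL : ζ ^ (a + 1) * qPoch z ζ (a + 1) * qPoch (z⁻¹ * ζ) ζ (a + 1) *
        (qPoch z ζ (b + 1) * qPoch (z⁻¹ * ζ) ζ (b + 1)) * (B1 * B2)
        = (ζ * A1 * A2) *
          (ζ ^ a * qPoch z ζ a * qPoch (z⁻¹ * ζ) ζ a *
            (qPoch z ζ (b + 1 + 1) * qPoch (z⁻¹ * ζ) ζ (b + 1 + 1))) := by
      rw [hPa, hQa, hPb, hQb, pow_succ]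
      ring
    rw [hL, IH]
    -- now a pure identity in powers of ζ
    refine mul_left_cancel₀ (pow_ne_zero (2 * (a + 1)) hζ0) ?_
    have expand : ζ ^ (2 * (a + 1)) * (ζ * A1 * A2 * (ζ ^ ((b + 2) * (b + 1)) *
        ((1 - z ^ m) * (1 - z⁻¹ ^ m))))
        = ζ ^ ((b + 2) * (b + 1) + 1 + 2 * (a + 1)) * (A1 * A2 * ((1 - z ^ m) * (1 - z⁻¹ ^ m))) := by
      rw [pow_add, pow_add]
      ring
    rw [expand, hbig]
    have expand2 : ζ ^ (2 * (a + 1)) * (ζ ^ ((b + 1) * b) * ((1 - z ^ m) * (1 - z⁻¹ ^ m)) *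
        (B1 * B2))
        = ζ ^ ((b + 1) * b) * ((1 - z ^ m) * (1 - z⁻¹ ^ m)) *
          ((ζ ^ (a + 1) * B1) * (ζ ^ (a + 1) * B2)) := by
      rw [show 2 * (a + 1) = (a + 1) + (a + 1) by ring, pow_add]
      ring
    rw [expand2, h1, h2]
    rw [pow_add]
    have : -z * A2 * (-(z⁻¹ * ζ) * A1) = (z * z⁻¹) * ζ * A1 * A2 := by ring
    rw [this, hzz]
    ring

/-- Theorem 2: Let `ζ_m = e^{2πi/m}`, `z ≠ 0`, `z^m ≠ 1`, and
`|2 − z^m − z^{-m}| > 1`.  Then the series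
`g₃(z,ζ_m) = ∑_{n=1}^∞ ζ_m^{n(n-1)} / ((z;ζ_m)_n (z⁻¹ζ_m;ζ_m)_n)` converges and
`g₃(z,ζ_m) = (1 − z^m − z^{-m})⁻¹ ∑_{n=0}^{m-1} ζ_m^n (z;ζ_m)_n (z⁻¹ζ_m;ζ_m)_n`. -/
theorem g3_finite_formula_at_root_of_unity (m : ℕ) (hm : 0 < m)
    (ζ : ℂ) (hζ : ζ = Complex.exp (2 * Real.pi * Complex.I / m))
    (z : ℂ) (hz0 : z ≠ 0) (hzm : z ^ m ≠ 1)
    (hgt : 1 < ‖(2 - z ^ m - z⁻¹ ^ m : ℂ)‖) :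
    Summable (fun n : ℕ =>
      ζ ^ ((n + 1) * n) / (qPoch z ζ (n + 1) * qPoch (z⁻¹ * ζ) ζ (n + 1))) ∧
    (∑' n : ℕ, ζ ^ ((n + 1) * n) / (qPoch z ζ (n + 1) * qPoch (z⁻¹ * ζ) ζ (n + 1)))
      = (1 - z ^ m - z⁻¹ ^ m)⁻¹ *
          ∑ n ∈ Finset.range m, ζ ^ n * qPoch z ζ n * qPoch (z⁻¹ * ζ) ζ n := by
  have hprim : IsPrimitiveRoot ζ m := hζ ▸ Complex.isPrimitiveRoot_exp m hm.ne'
  have hζm : ζ ^ m = 1 := hprim.pow_eq_one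
  set f : ℕ → ℂ := fun n =>
    ζ ^ ((n + 1) * n) / (qPoch z ζ (n + 1) * qPoch (z⁻¹ * ζ) ζ (n + 1)) with hf
  set C : ℂ := (1 - z ^ m) * (1 - z⁻¹ ^ m) with hC
  -- basic facts
  have hzzm : z ^ m * z⁻¹ ^ m = 1 := by
    rw [← mul_pow, mul_inv_cancel₀ hz0, one_pow]
  have hC2 : C = 2 - z ^ m - z⁻¹ ^ m := by
    rw [hC]; linear_combination hzzm
  have habs : 1 < ‖C‖ := by
    rw [hC2]
    exact hgt
  have hC0 : C ≠ 0 := by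
    intro h
    rw [h, norm_zero] at habs
    linarith
  have hzim : z⁻¹ ^ m ≠ 1 := by
    intro h
    rw [h, mul_one] at hzzm
    exact hzm hzzm
  have hz1 : (1 : ℂ) - z ^ m ≠ 0 := sub_ne_zero.mpr (Ne.symm hzm)
  have hz2 : (1 : ℂ) - z⁻¹ ^ m ≠ 0 := sub_ne_zero.mpr (Ne.symm hzim)
  have hfac1 : ∀ i : ℕ, 1 - z * ζ ^ i ≠ 0 := by
    intro i h
    apply hzm
    have hz1' : z * ζ ^ i = 1 := by linear_combination -h
    calc z ^ m = z ^ m * ((ζ ^ i) ^ m) := by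
          rw [← pow_mul, mul_comm i m, pow_mul, hζm, one_pow, mul_one]
      _ = (z * ζ ^ i) ^ m := by rw [mul_pow]
      _ = 1 := by rw [hz1', one_pow]
  have hfac2 : ∀ i : ℕ, 1 - (z⁻¹ * ζ) * ζ ^ i ≠ 0 := by
    intro i h
    apply hzm
    have hz1' : z⁻¹ * ζ ^ (i + 1) = 1 := by
      rw [pow_succ]; linear_combination -h
    have hz2' : z = ζ ^ (i + 1) := by
      field_simp at hz1'
      rw [← hz1']
    calc z ^ m = (ζ ^ (i + 1)) ^ m := by rw [hz2']
      _ = (ζ ^ m) ^ (i + 1) := by rw [← pow_mul, mul_comm, pow_mul]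
      _ = 1 := by rw [hζm, one_pow]
  have hP : ∀ n : ℕ, qPoch z ζ n ≠ 0 := fun n =>
    Finset.prod_ne_zero_iff.mpr fun i _ => hfac1 i
  have hQ : ∀ n : ℕ, qPoch (z⁻¹ * ζ) ζ n ≠ 0 := fun n =>
    Finset.prod_ne_zero_iff.mpr fun i _ => hfac2 i
  -- recurrence f (n + m) = f n * C⁻¹
  have hQper : ∀ n : ℕ, qPoch (z⁻¹ * ζ) ζ (n + m) = qPoch (z⁻¹ * ζ) ζ n * (1 - z⁻¹ ^ m) := by
    intro n
    have := qPoch_period hm hprim (z⁻¹ * ζ) n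
    rwa [mul_pow, hζm, mul_one] at this
  have frec : ∀ n : ℕ, f (n + m) = f n * C⁻¹ := by
    intro n
    have hexp : (n + m + 1) * (n + m) = (n + 1) * n + m * (2 * n + m + 1) := by ring
    have hzexp : ζ ^ ((n + m + 1) * (n + m)) = ζ ^ ((n + 1) * n) := by
      have h2 : ζ ^ (m * (2 * n + m + 1)) = 1 := by rw [pow_mul, hζm, one_pow]
      rw [hexp, pow_add, h2, mul_one]
    have hPper : qPoch z ζ (n + m + 1) = qPoch z ζ (n + 1) * (1 - z ^ m) := by
      have := qPoch_period hm hprim z (n + 1)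
      rw [← this]
      congr 1
      omega
    have hQper' : qPoch (z⁻¹ * ζ) ζ (n + m + 1) = qPoch (z⁻¹ * ζ) ζ (n + 1) * (1 - z⁻¹ ^ m) := by
      have := hQper (n + 1)
      rw [← this]
      congr 1
      omega
    rw [hf]
    simp only
    rw [hzexp, hPper, hQper', hC]
    field_simp
  have hiter : ∀ k i : ℕ, f (i + m * k) = f i * (C⁻¹) ^ k := by
    intro k
    induction k with
    | zero => intro i; simp
    | succ k ih =>
      intro i
      have h1 : i + m * (k + 1) = (i + m * k) + m := by ring
      rw [h1, frec, ih, pow_succ, mul_assoc]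
  -- summability
  set s : ℝ := ‖C⁻¹‖ with hs
  have hs0 : 0 ≤ s := norm_nonneg _
  have hs1 : s < 1 := by
    rw [hs, norm_inv]
    rw [inv_lt_one_iff₀]
    right
    exact habs
  set A : ℝ := ∑ i ∈ Finset.range m, ‖f i‖ with hA
  have hA0 : 0 ≤ A := Finset.sum_nonneg fun i _ => norm_nonneg _
  have hblock : ∀ K : ℕ, ∑ n ∈ Finset.range (m * K), ‖f n‖ = A * ∑ k ∈ Finset.range K, s ^ k := by
    intro K
    induction K with
    | zero => simp
    | succ K ih =>
      have h1 : m * (K + 1) = m * K + m := by ring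
      rw [h1, Finset.sum_range_add, ih, Finset.sum_range_succ]
      have h2 : ∀ i : ℕ, ‖f (m * K + i)‖ = ‖f i‖ * s ^ K := by
        intro i
        rw [show m * K + i = i + m * K by ring, hiter, norm_mul, norm_pow]
      have h3 : ∑ i ∈ Finset.range m, ‖f (m * K + i)‖ = A * s ^ K := by
        rw [hA, Finset.sum_mul]
        exact Finset.sum_congr rfl fun i _ => h2 i
      rw [h3]
      ring
  have hgeom : ∀ K : ℕ, ∑ k ∈ Finset.range K, s ^ k ≤ (1 - s)⁻¹ := by
    intro K
    have hsum := hasSum_geometric_of_lt_one hs0 hs1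
    exact Summable.sum_le_tsum (Finset.range K) (fun k _ => pow_nonneg hs0 k) hsum.summable
      |>.trans_eq hsum.tsum_eq
  have hbound : ∀ N : ℕ, ∑ n ∈ Finset.range N, ‖f n‖ ≤ A * (1 - s)⁻¹ := by
    intro N
    have h1 : ∑ n ∈ Finset.range N, ‖f n‖ ≤ ∑ n ∈ Finset.range (m * N), ‖f n‖ := by
      apply Finset.sum_le_sum_of_subset_of_nonneg
      · exact Finset.range_subset_range.mpr (Nat.le_mul_of_pos_left N hm)
      · intro i _ _; exact norm_nonneg _
    rw [hblock N] at h1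
    calc ∑ n ∈ Finset.range N, ‖f n‖ ≤ A * ∑ k ∈ Finset.range N, s ^ k := h1
      _ ≤ A * (1 - s)⁻¹ := by
          apply mul_le_mul_of_nonneg_left (hgeom N) hA0
  have hsummable_norm : Summable fun n => ‖f n‖ :=
    summable_of_sum_range_le (fun n => norm_nonneg _) hbound
  have hsummable : Summable f := hsummable_norm.of_norm
  refine ⟨hsummable, ?_⟩
  -- the tsum equation
  set S : ℂ := ∑' n, f n with hS
  have heq1 : (∑ i ∈ Finset.range m, f i) + ∑' n, f (n + m) = S := by
    exact hsummable.sum_add_tsum_nat_add m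
  have heq2 : (∑' n, f (n + m)) = S * C⁻¹ := by
    calc (∑' n, f (n + m)) = ∑' n, f n * C⁻¹ := by
          exact tsum_congr fun n => frec n
      _ = S * C⁻¹ := tsum_mul_right
  have hCinv1 : (1 : ℂ) - C⁻¹ ≠ 0 := by
    have h1 : ‖C⁻¹‖ < 1 := hs1
    intro h
    have h2 : C⁻¹ = 1 := by linear_combination -h
    rw [h2, norm_one] at h1
    linarith
  have hkey : S * (1 - C⁻¹) = ∑ i ∈ Finset.range m, f i := by
    rw [heq2] at heq1
    linear_combination -heq1
  -- finite identity : C * (∑ f i over range m) = B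
  have hterm : ∀ b : ℕ, b < m → C * f b = ζ ^ (m - 1 - b) * qPoch z ζ (m - 1 - b) *
      qPoch (z⁻¹ * ζ) ζ (m - 1 - b) := by
    intro b hb
    have hab : (m - 1 - b) + b + 1 = m := by omega
    have hkey' := key_identity hm hprim hz0 hzm (m - 1 - b) b hab
    have hD : qPoch z ζ (b + 1) * qPoch (z⁻¹ * ζ) ζ (b + 1) ≠ 0 :=
      mul_ne_zero (hP _) (hQ _)
    rw [hf]
    simp only
    rw [← mul_div_assoc, div_eq_iff hD, hC]
    linear_combination -hkey'
  have hfin : C * (∑ i ∈ Finset.range m, f i)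
      = ∑ n ∈ Finset.range m, ζ ^ n * qPoch z ζ n * qPoch (z⁻¹ * ζ) ζ n := by
    rw [Finset.mul_sum]
    rw [← Finset.sum_range_reflect (fun n => ζ ^ n * qPoch z ζ n * qPoch (z⁻¹ * ζ) ζ n) m]
    exact Finset.sum_congr rfl fun b hb => hterm b (Finset.mem_range.mp hb)
  -- conclude
  have hSval : S = (∑ i ∈ Finset.range m, f i) * (1 - C⁻¹)⁻¹ := by
    rw [← hkey, mul_assoc, mul_inv_cancel₀ hCinv1, mul_one]
  have hfinal : (1 - z ^ m - z⁻¹ ^ m) = C - 1 := by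
    rw [hC2]; ring
  rw [hSval, hfinal]
  have hC1ne : C - 1 ≠ 0 := by
    intro h
    have : C = 1 := by linear_combination h
    rw [this] at habs
    simp at habs
  rw [← hfin]
  have h1c : (1 - C⁻¹) = (C - 1) * C⁻¹ := by
    field_simp
  rw [h1c]
  rw [mul_inv, inv_inv]
  ring
end
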